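/- The linear map Λ_p(X) = Tr(X)·I − pX on M_d(C) is k-positive if 1/(k+1) ≤ p ≤ 1/k (for k < d), and is not (k+1)-positive when p > 1/(k+1). -/

import Mathlib

open scoped BigOperators ComplexConjugate ComplexOrder

noncomputable section

/-- The extension `(I_m ⊗ Λ)` of a map `Λ : M_d → M_d`. -/
def matExt {d : ℕ} (m : ℕ) (Λ : Matrix (Fin d) (Fin d) ℂ → Matrix (Fin d) (Fin d) ℂ)
    (ρ : Matrix (Fin m × Fin d) (Fin m × Fin d) ℂ) :
    Matrix (Fin m × Fin d) (Fin m × Fin d) ℂ :=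
  fun p q => (Λ (Matrix.of fun i j => ρ (p.1, i) (q.1, j))) p.2 q.2

/-- `Λ` is `m`-positive. -/
def kPositive (d m : ℕ) (Λ : Matrix (Fin d) (Fin d) ℂ → Matrix (Fin d) (Fin d) ℂ) : Prop :=
  ∀ ρ : Matrix (Fin m × Fin d) (Fin m × Fin d) ℂ, ρ.PosSemidef → (matExt m Λ ρ).PosSemidef

/-- The map `Λ_p(X) = Tr(X)·I − p·X`. -/
def lamP (d : ℕ) (p : ℝ) (X : Matrix (Fin d) (Fin d) ℂ) : Matrix (Fin d) (Fin d) ℂ :=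
  X.trace • (1 : Matrix (Fin d) (Fin d) ℂ) - (p : ℂ) • X

/-!
Every positive semidefinite `ρ` is a sum of rank-one matrices `ψψ*`, so it suffices to test
`(I ⊗ Λ_p)(ψψ*)`. Writing `ψ = vec Y` and `v = vec X`, its quadratic form at `v` is
`‖M‖_F² - p |tr M|²` with `M = X Yᴴ`, a `d × d` matrix factoring through `ℂ^m`. Projecting onto an
orthonormal basis of the column space of `X` and applying Cauchy–Schwarz to the Frobenius inner
product gives `|tr M|² ≤ m ‖M‖_F²`, whence positivity for `m p ≤ 1`. Conversely, for an isometry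
`Y : ℂ^n → ℂ^d` (a maximally entangled `ψ = v = vec Y`) the form equals `n - p n²`, which is
negative once `n p > 1`.
-/

open Matrix

namespace Matrix

variable {𝕜 n m : Type*} [RCLike 𝕜] [Fintype n] [Fintype m]

theorem norm_trace_conjTranspose_mul_sq_le (A B : Matrix n m 𝕜) :
    ‖(Aᴴ * B).trace‖ ^ 2 ≤ RCLike.re (Aᴴ * A).trace * RCLike.re (Bᴴ * B).trace := by
  have h := norm_inner_le_norm (𝕜 := 𝕜) (WithLp.toLp 2 A.vec) (WithLp.toLp 2 B.vec)
  have hA := inner_self_eq_norm_sq (𝕜 := 𝕜) (WithLp.toLp 2 A.vec)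
  have hB := inner_self_eq_norm_sq (𝕜 := 𝕜) (WithLp.toLp 2 B.vec)
  simp only [EuclideanSpace.inner_toLp_toLp, dotProduct_comm _ (star _),
    star_vec_dotProduct_vec] at h hA hB
  rw [hA, hB, ← mul_pow]
  exact pow_le_pow_left₀ (norm_nonneg _) h 2

theorem re_trace_conjTranspose_mul_self_nonneg (A : Matrix n m 𝕜) :
    0 ≤ RCLike.re (Aᴴ * A).trace :=
  (RCLike.nonneg_iff.mp (posSemidef_conjTranspose_mul_self A).trace_nonneg).1

theorem exists_orthonormal_cols_mul_conjTranspose_mul_eq (X : Matrix n m 𝕜) :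
    ∃ r ≤ Fintype.card m, ∃ Q : Matrix n (Fin r) 𝕜, Qᴴ * Q = 1 ∧ Q * Qᴴ * X = X := by
  classical
  let W := LinearMap.range (toEuclideanLin X)
  let b := stdOrthonormalBasis 𝕜 W
  refine ⟨Module.finrank 𝕜 W, ?_, of fun i j => (b j : EuclideanSpace 𝕜 n) i, ?_, ?_⟩
  · simpa using LinearMap.finrank_range_le (toEuclideanLin X)
  · ext j j'
    have := orthonormal_iff_ite.mp b.orthonormal j j'
    simp only [Submodule.coe_inner, EuclideanSpace.inner_eq_star_dotProduct] at this
    simpa [mul_apply, one_apply, dotProduct, mul_comm] using this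
  · have hrepr (w : EuclideanSpace 𝕜 n) (hw : w ∈ W) :
        ∑ j, inner 𝕜 (b j : EuclideanSpace 𝕜 n) w • (b j : EuclideanSpace 𝕜 n) = w := by
      simpa using congrArg Subtype.val (b.sum_repr' ⟨w, hw⟩)
    ext i l
    have hcol := congrArg (· i)
      (hrepr _ (LinearMap.mem_range_self (toEuclideanLin X) (EuclideanSpace.single l 1)))
    simp only [EuclideanSpace.inner_eq_star_dotProduct, dotProduct, ofLp_toLpLin,
      PiLp.ofLp_single, toLin'_apply, mulVec_single, MulOpposite.op_one, Pi.smul_apply, col_apply,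
      one_smul, Pi.star_apply, RCLike.star_def, WithLp.ofLp_sum, WithLp.ofLp_smul,
      Finset.sum_apply, smul_eq_mul, Finset.sum_mul] at hcol
    simp only [mul_apply, of_apply, conjTranspose_apply, RCLike.star_def, Finset.sum_mul]
    rw [Finset.sum_comm, ← hcol]
    exact Finset.sum_congr rfl fun _ _ => Finset.sum_congr rfl fun _ _ => by ring

theorem norm_trace_mul_sq_le (X : Matrix n m 𝕜) (Z : Matrix m n 𝕜) :
    ‖(X * Z).trace‖ ^ 2 ≤ Fintype.card m * RCLike.re ((X * Z)ᴴ * (X * Z)).trace := by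
  obtain ⟨r, hr, Q, hQ, hQX⟩ := exists_orthonormal_cols_mul_conjTranspose_mul_eq X
  set M := X * Z
  have hQM : Q * Qᴴ * M = M := by rw [← Matrix.mul_assoc, hQX]
  have hQQ : RCLike.re (Qᴴᴴ * Qᴴ).trace = r := by
    rw [conjTranspose_conjTranspose, trace_mul_comm, hQ]; simp
  have hQMQM : (Qᴴ * M)ᴴ * (Qᴴ * M) = Mᴴ * M := by
    rw [conjTranspose_mul, conjTranspose_conjTranspose, Matrix.mul_assoc, ← Matrix.mul_assoc Q,
      hQM]
  calc ‖M.trace‖ ^ 2 = ‖(Qᴴᴴ * (Qᴴ * M)).trace‖ ^ 2 := by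
        rw [conjTranspose_conjTranspose, ← Matrix.mul_assoc, hQM]
    _ ≤ RCLike.re (Qᴴᴴ * Qᴴ).trace * RCLike.re ((Qᴴ * M)ᴴ * (Qᴴ * M)).trace :=
        norm_trace_conjTranspose_mul_sq_le _ _
    _ ≤ Fintype.card m * RCLike.re (Mᴴ * M).trace := by
        rw [hQQ, hQMQM]
        exact mul_le_mul_of_nonneg_right (by exact_mod_cast hr)
          (re_trace_conjTranspose_mul_self_nonneg M)

end Matrix

section

open scoped Kronecker

variable {d m : ℕ}

theorem matExt_sum (Λ : Matrix (Fin d) (Fin d) ℂ →+ Matrix (Fin d) (Fin d) ℂ) {ι : Type*}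
    (s : Finset ι) (ρ : ι → Matrix (Fin m × Fin d) (Fin m × Fin d) ℂ) :
    matExt m Λ (∑ i ∈ s, ρ i) = ∑ i ∈ s, matExt m Λ (ρ i) := by
  ext x y
  have : (of fun i j => (∑ c ∈ s, ρ c) (x.1, i) (y.1, j)) =
      ∑ c ∈ s, of fun i j => ρ c (x.1, i) (y.1, j) := by
    ext; simp [Matrix.sum_apply]
  simp only [matExt]
  rw [this, map_sum, Matrix.sum_apply, Matrix.sum_apply]
  rfl

theorem kPositive_of_forall_vecMulVec (Λ : Matrix (Fin d) (Fin d) ℂ → Matrix (Fin d) (Fin d) ℂ)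
    (hΛ : ∀ X Y, Λ (X + Y) = Λ X + Λ Y)
    (h : ∀ ψ : Fin m × Fin d → ℂ, (matExt m Λ (vecMulVec ψ (star ψ))).PosSemidef) :
    kPositive d m Λ := by
  intro ρ hρ
  obtain ⟨r, ψ, rfl⟩ := posSemidef_iff_eq_sum_vecMulVec.mp hρ
  change (matExt m (AddMonoidHom.mk' Λ hΛ) _).PosSemidef
  rw [matExt_sum]
  exact posSemidef_sum _ fun i _ => h (ψ i)

theorem lamP_add (p : ℝ) (X Y : Matrix (Fin d) (Fin d) ℂ) :
    lamP d p (X + Y) = lamP d p X + lamP d p Y := by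
  simp only [lamP, trace_add, add_smul, smul_add]
  abel

-- `vec Y (a, i) = Y i a`, so the partial trace of `ψψ*` over the second factor is `(Yᴴ * Y)ᵀ`.
theorem matExt_lamP_vecMulVec_vec (p : ℝ) (Y : Matrix (Fin d) (Fin m) ℂ) :
    matExt m (lamP d p) (vecMulVec (vec Y) (star (vec Y))) =
      (Yᴴ * Y)ᵀ ⊗ₖ 1 - (p : ℂ) • vecMulVec (vec Y) (star (vec Y)) := by
  ext ⟨a, i⟩ ⟨b, j⟩
  simp [matExt, lamP, vecMulVec, mul_apply, trace, one_apply, mul_comm]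

theorem star_vec_dotProduct_matExt_lamP_mulVec_vec (p : ℝ) (X Y : Matrix (Fin d) (Fin m) ℂ) :
    star (vec X) ⬝ᵥ matExt m (lamP d p) (vecMulVec (vec Y) (star (vec Y))) *ᵥ vec X =
      ((X * Yᴴ)ᴴ * (X * Yᴴ)).trace - p * (star (X * Yᴴ).trace * (X * Yᴴ).trace) := by
  rw [matExt_lamP_vecMulVec_vec, sub_mulVec, dotProduct_sub, smul_mulVec, dotProduct_smul,
    kronecker_mulVec_vec, vecMulVec_mulVec, dotProduct_smul, star_vec_dotProduct_vec,
    star_vec_dotProduct_vec, star_vec_dotProduct_vec]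
  rw [← trace_conjTranspose, trace_mul_comm X, conjTranspose_mul, conjTranspose_conjTranspose,
    trace_mul_comm Y, op_smul_eq_mul, transpose_transpose, Matrix.one_mul, smul_eq_mul]
  simp only [Matrix.mul_assoc]
  rw [trace_mul_comm Y]
  simp only [Matrix.mul_assoc]

theorem posSemidef_matExt_lamP_vecMulVec {p : ℝ} (hp : 0 ≤ p) (hmp : m * p ≤ 1)
    (ψ : Fin m × Fin d → ℂ) : (matExt m (lamP d p) (vecMulVec ψ (star ψ))).PosSemidef := by
  obtain ⟨Y, rfl⟩ := vec_bijective.surjective ψ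
  refine .of_dotProduct_mulVec_nonneg ?_ fun v => ?_
  · rw [matExt_lamP_vecMulVec_vec]
    have h1 : ((Yᴴ * Y)ᵀ ⊗ₖ (1 : Matrix (Fin d) (Fin d) ℂ)).IsHermitian :=
      ((posSemidef_conjTranspose_mul_self Y).transpose.kronecker PosSemidef.one).isHermitian
    have h2 : ((p : ℂ) • vecMulVec (vec Y) (star (vec Y))).IsHermitian :=
      (posSemidef_vecMulVec_self_star (vec Y)).isHermitian.smul (Complex.conj_ofReal p)
    exact h1.sub h2
  · obtain ⟨X, rfl⟩ := vec_bijective.surjective v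
    rw [star_vec_dotProduct_matExt_lamP_mulVec_vec]
    set M := X * Yᴴ
    have htrace : ‖M.trace‖ ^ 2 ≤ m * (Mᴴ * M).trace.re := by
      simpa only [Fintype.card_fin, RCLike.re_to_complex] using norm_trace_mul_sq_le X Yᴴ
    obtain ⟨hF, hFim⟩ := Complex.nonneg_iff.mp (posSemidef_conjTranspose_mul_self M).trace_nonneg
    rw [Complex.star_def, Complex.conj_mul']
    refine Complex.nonneg_iff.mpr ⟨?_, ?_⟩
    · simp only [Complex.sub_re, Complex.re_ofReal_mul]
      norm_cast
      nlinarith [mul_le_mul_of_nonneg_left htrace hp, mul_nonneg hF (sub_nonneg.mpr hmp)]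
    · simp [← hFim, ← Complex.ofReal_pow]

theorem lamP_kPositive {p : ℝ} (hp : 0 ≤ p) (hmp : m * p ≤ 1) : kPositive d m (lamP d p) :=
  kPositive_of_forall_vecMulVec _ (lamP_add p) (posSemidef_matExt_lamP_vecMulVec hp hmp)

theorem lamP_not_kPositive {n : ℕ} (hnd : n ≤ d) {p : ℝ} (hp : 1 < n * p) :
    ¬ kPositive d n (lamP d p) := by
  intro h
  let Y : Matrix (Fin d) (Fin n) ℂ := (1 : Matrix (Fin d) (Fin d) ℂ).submatrix id (Fin.castLE hnd)
  have hY : Yᴴ * Y = 1 := by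
    ext a b
    simp [Y, mul_apply, one_apply]
  have hP : (Y * Yᴴ)ᴴ * (Y * Yᴴ) = Y * Yᴴ := by
    rw [conjTranspose_mul, conjTranspose_conjTranspose, Matrix.mul_assoc, ← Matrix.mul_assoc Yᴴ,
      hY, Matrix.one_mul]
  have htr : (Y * Yᴴ).trace = n := by rw [trace_mul_comm, hY, trace_one, Fintype.card_fin]
  have hnonneg := (h _ (posSemidef_vecMulVec_self_star (vec Y))).dotProduct_mulVec_nonneg (vec Y)
  rw [star_vec_dotProduct_matExt_lamP_mulVec_vec, hP, htr, star_natCast] at hnonneg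
  have : (0 : ℝ) ≤ n - p * (n * n) := by exact_mod_cast hnonneg
  have hn : (0 : ℝ) < n := Nat.cast_pos.mpr <| Nat.pos_of_ne_zero <| by rintro rfl; norm_num at hp
  nlinarith [mul_lt_mul_of_pos_left hp hn]

end

theorem lamP_kpositivity_general (d k : ℕ) (hkd : k < d) (p : ℝ) :
    ((1 / ((k : ℝ) + 1) ≤ p ∧ p ≤ 1 / (k : ℝ)) → kPositive d k (lamP d p)) ∧
    (1 / ((k : ℝ) + 1) < p → ¬ kPositive d (k + 1) (lamP d p)) := by
  have hk1 : (0 : ℝ) < k + 1 := by positivity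
  refine ⟨fun ⟨hp1, hp2⟩ => lamP_kPositive ((by positivity : (0 : ℝ) ≤ _).trans hp1) ?_,
    fun hp => lamP_not_kPositive hkd ?_⟩
  · calc (k : ℝ) * p ≤ k * (1 / k) := by gcongr
      _ ≤ 1 := by rw [one_div]; exact mul_inv_le_one
  · push_cast
    rwa [div_lt_iff₀ hk1, mul_comm] at hp

/-- Tomiyama: `Λ_p` is `k`-positive for `1/(k+1) ≤ p ≤ 1/k` (with `k < d`),
and not `(k+1)`-positive when `p > 1/(k+1)`. -/
theorem lamP_kpositivity (d k : ℕ) (hk : 0 < k) (hkd : k < d) (p : ℝ) :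
    ((1 / ((k : ℝ) + 1) ≤ p ∧ p ≤ 1 / (k : ℝ)) → kPositive d k (lamP d p)) ∧
    (1 / ((k : ℝ) + 1) < p → ¬ kPositive d (k + 1) (lamP d p)) :=
  lamP_kpositivity_general d k hkd p
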